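/- arXiv:2001.10141 — 2 statements merged into one kernel-verified Lean document; each statement's English description precedes it below -/
import Mathlib

section
/- Let m ≥ 1, let x_1 < x_2 < … < x_m be real numbers, let f_0,…,f_m and g_0,…,g_m : ℝ → ℂ be smooth functions, let N ∈ ℕ, and let a_{ij}, b_{ij} ∈ ℂ for 1 ≤ i ≤ m, 0 ≤ j ≤ N. Define f, g : ℝ → ℂ by f(x) = f_i(x) and g(x) = g_i(x) for x ∈ (x_i, x_{i+1}), i = 0,…,m (with x_0 = −∞, x_{m+1} = +∞). Then for every test function t one has lim_{ε→0⁺} [ ∫_ℝ f(x) g(x+ε) t(x) dx + Σ_{i=1}^m Σ_{j=0}^N a_{ij} (−1)^j (d/dx)^j ( g_i(x+ε) t(x) ) |_{x=x_i} + Σ_{i=1}^m Σ_{j=0}^N b_{ij} (−1)^j (d/dx)^j ( f_{i−1}(x) t(x) ) |_{x=x_i−ε} ] = ∫_ℝ f(x) g(x) t(x) dx + Σ_{i=1}^m Σ_{j=0}^N (−1)^j (d/dx)^j ( ( a_{ij} g_i(x) + b_{ij} f_{i−1}(x) ) t(x) ) |_{x=x_i}. -/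
open MeasureTheory Filter Set
open scoped Topology Pointwise

private lemma itd_add {u v : ℝ → ℂ} (hu : ContDiff ℝ (⊤ : ℕ∞) u) (hv : ContDiff ℝ (⊤ : ℕ∞) v) (j : ℕ) (p : ℝ) :
    iteratedDeriv j (fun y => u y + v y) p = iteratedDeriv j u p + iteratedDeriv j v p := by
  simp only [← iteratedDerivWithin_univ]
  exact iteratedDerivWithin_add (Set.mem_univ p) uniqueDiffOn_univ
    ((hu.of_le le_rfl).of_le (by exact_mod_cast le_top)).contDiffWithinAt
    ((hv.of_le le_rfl).of_le (by exact_mod_cast le_top)).contDiffWithinAt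

private lemma itd_cmul (c : ℂ) {u : ℝ → ℂ} (hu : ContDiff ℝ (⊤ : ℕ∞) u) (j : ℕ) (p : ℝ) :
    iteratedDeriv j (fun y => c * u y) p = c * iteratedDeriv j u p := by
  simp only [← iteratedDerivWithin_univ]
  have := iteratedDerivWithin_const_smul (F := ℂ) (𝕜 := ℝ) (s := Set.univ) (x := p) (n := j)
    (Set.mem_univ p) uniqueDiffOn_univ c
    ((hu.of_le ((by exact_mod_cast le_top) : (j : WithTop ℕ∞) ≤ ((⊤ : ℕ∞) : WithTop ℕ∞))).contDiffWithinAt)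
  simpa [smul_eq_mul] using this

private lemma leibniz_key (j : ℕ) (A : ℕ → ℕ → ℂ) :
    ∑ k ∈ Finset.range (j+1), (j.choose k : ℂ) * A (k+1) (j-k)
      + ∑ k ∈ Finset.range (j+1), (j.choose k : ℂ) * A k (j-k+1)
    = ∑ k ∈ Finset.range (j+2), ((j+1).choose k : ℂ) * A k (j+1-k) := by
  rw [Finset.sum_range_succ' (fun k => ((j+1).choose k : ℂ) * A k (j+1-k)) (j+1)]
  rw [Finset.sum_range_succ' (fun k => (j.choose k : ℂ) * A k (j-k+1)) j]
  have e1 : ∀ k ∈ Finset.range j, (j.choose (k+1) : ℂ) * A (k+1) (j-(k+1)+1)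
      = (j.choose (k+1) : ℂ) * A (k+1) (j-k) := by
    intro k hk
    rw [Finset.mem_range] at hk
    have h : j - (k+1) + 1 = j - k := by omega
    rw [h]
  have e2 : ∀ k ∈ Finset.range (j+1), ((j+1).choose (k+1) : ℂ) * A (k+1) (j+1-(k+1))
      = (j.choose k : ℂ) * A (k+1) (j-k) + (j.choose (k+1) : ℂ) * A (k+1) (j-k) := by
    intro k hk
    rw [Nat.succ_sub_succ, Nat.choose_succ_succ]
    push_cast; ring
  rw [Finset.sum_congr rfl e1, Finset.sum_congr rfl e2, Finset.sum_add_distrib,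
    Finset.sum_range_succ (fun k => (j.choose (k+1) : ℂ) * A (k+1) (j-k)) j]
  simp [Nat.choose_succ_self]
  ring

private lemma leibniz_itd {u v : ℝ → ℂ} (hu : ContDiff ℝ (⊤ : ℕ∞) u) (hv : ContDiff ℝ (⊤ : ℕ∞) v) (j : ℕ) :
    iteratedDeriv j (fun y => u y * v y) = fun p =>
      ∑ k ∈ Finset.range (j + 1),
        (j.choose k : ℂ) * iteratedDeriv k u p * iteratedDeriv (j - k) v p := by
  induction j with
  | zero => simp
  | succ j IH =>
    funext p
    have hdu : ∀ k, Differentiable ℝ (iteratedDeriv k u) := fun k =>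
      (hu.of_le le_rfl).differentiable_iteratedDeriv k
        (by exact_mod_cast (ENat.coe_lt_top k))
    have hdv : ∀ k, Differentiable ℝ (iteratedDeriv k v) := fun k =>
      (hv.of_le le_rfl).differentiable_iteratedDeriv k
        (by exact_mod_cast (ENat.coe_lt_top k))
    rw [iteratedDeriv_succ, IH]
    have hterm : ∀ k ∈ Finset.range (j + 1), DifferentiableAt ℝ
        (fun q => (j.choose k : ℂ) * iteratedDeriv k u q * iteratedDeriv (j - k) v q) p :=
      fun k _ => (((hdu k).differentiableAt.const_mul _).mul (hdv (j - k)).differentiableAt)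
    rw [deriv_fun_sum hterm]
    have hder : ∀ k ∈ Finset.range (j + 1),
        deriv (fun q => (j.choose k : ℂ) * iteratedDeriv k u q * iteratedDeriv (j - k) v q) p
          = (j.choose k : ℂ) * iteratedDeriv (k+1) u p * iteratedDeriv (j - k) v p
            + (j.choose k : ℂ) * iteratedDeriv k u p * iteratedDeriv (j - k + 1) v p := by
      intro k _
      rw [deriv_fun_mul (((hdu k).differentiableAt).const_mul _) (hdv (j - k)).differentiableAt,
        deriv_const_mul _ (hdu k).differentiableAt, ← iteratedDeriv_succ, ← iteratedDeriv_succ]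
    rw [Finset.sum_congr rfl hder, Finset.sum_add_distrib]
    simp only [mul_assoc]
    exact leibniz_key j (fun k l => iteratedDeriv k u p * iteratedDeriv l v p)

private lemma tendsto_sub_right (p : ℝ) :
    Filter.Tendsto (fun ε : ℝ => p - ε) (𝓝[>] 0) (𝓝 p) := by
  have : Filter.Tendsto (fun ε : ℝ => p - ε) (𝓝 0) (𝓝 (p - 0)) :=
    (continuous_const.sub continuous_id).tendsto 0
  simpa using this.mono_left nhdsWithin_le_nhds

private lemma tendsto_add_right (p : ℝ) :
    Filter.Tendsto (fun ε : ℝ => p + ε) (𝓝[>] 0) (𝓝 p) := by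
  have : Filter.Tendsto (fun ε : ℝ => p + ε) (𝓝 0) (𝓝 (p + 0)) :=
    (continuous_const.add continuous_id).tendsto 0
  simpa using this.mono_left nhdsWithin_le_nhds

private lemma tendsto_itd_sub {w : ℝ → ℂ} (hw : ContDiff ℝ (⊤ : ℕ∞) w) (j : ℕ) (p : ℝ) :
    Filter.Tendsto (fun ε : ℝ => iteratedDeriv j w (p - ε)) (𝓝[>] 0)
      (𝓝 (iteratedDeriv j w p)) :=
  ((hw.continuous_iteratedDeriv j (by exact_mod_cast le_top)).tendsto p).comp (tendsto_sub_right p)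

private lemma tendsto_itd_shift {u t : ℝ → ℂ} (hu : ContDiff ℝ (⊤ : ℕ∞) u) (ht : ContDiff ℝ (⊤ : ℕ∞) t)
    (j : ℕ) (p : ℝ) :
    Filter.Tendsto (fun ε : ℝ => iteratedDeriv j (fun y => u (y + ε) * t y) p) (𝓝[>] 0)
      (𝓝 (iteratedDeriv j (fun y => u y * t y) p)) := by
  have hform : ∀ ε : ℝ, iteratedDeriv j (fun y => u (y + ε) * t y) p
      = ∑ k ∈ Finset.range (j + 1),
          (j.choose k : ℂ) * iteratedDeriv k u (p + ε) * iteratedDeriv (j - k) t p := by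
    intro ε
    have hu' : ContDiff ℝ (⊤ : ℕ∞) (fun y : ℝ => u (y + ε)) :=
      hu.comp (contDiff_id.add contDiff_const)
    rw [leibniz_itd hu' ht]
    simp [iteratedDeriv_comp_add_const]
  have hlim : iteratedDeriv j (fun y => u y * t y) p
      = ∑ k ∈ Finset.range (j + 1),
          (j.choose k : ℂ) * iteratedDeriv k u p * iteratedDeriv (j - k) t p := by
    rw [leibniz_itd hu ht]
  simp only [hform, hlim]
  refine tendsto_finset_sum _ (fun k _ => ?_)
  exact ((((hu.continuous_iteratedDeriv k (by exact_mod_cast le_top)).tendsto p).comp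
    (tendsto_add_right p)).const_mul _).mul_const _

/-- trichotomy for points avoiding the breakpoints -/
private lemma tri_lemma (m : ℕ) (hm : 1 ≤ m) (x : ℕ → ℝ)
    (hx : ∀ i j, 1 ≤ i → i < j → j ≤ m → x i < x j) (y : ℝ)
    (hy : ∀ i, 1 ≤ i → i ≤ m → y ≠ x i) :
    y < x 1 ∨ x m < y ∨ ∃ i, 1 ≤ i ∧ i < m ∧ x i < y ∧ y < x (i + 1) := by
  set S := (Finset.Icc 1 m).filter (fun i => x i < y) with hS
  by_cases hne : S.Nonempty
  · right
    set i := S.max' hne with hi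
    have hiS : i ∈ S := S.max'_mem hne
    rw [hS, Finset.mem_filter, Finset.mem_Icc] at hiS
    obtain ⟨⟨hi1, him⟩, hxi⟩ := hiS
    rcases eq_or_lt_of_le him with h | h
    · left; rw [← h]; exact hxi
    · right
      refine ⟨i, hi1, h, hxi, ?_⟩
      have hnotin : i + 1 ∉ S := by
        intro hmem
        have := S.le_max' _ hmem
        omega
      rw [hS, Finset.mem_filter, Finset.mem_Icc] at hnotin
      push_neg at hnotin
      have := hnotin ⟨by omega, by omega⟩
      rcases lt_or_eq_of_le this with h' | h'
      · exact h'
      · exact absurd h' (hy (i+1) (by omega) (by omega))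
  · left
    rw [Finset.not_nonempty_iff_eq_empty, hS, Finset.filter_eq_empty_iff] at hne
    have h1 := hne (Finset.mem_Icc.mpr ⟨le_refl 1, hm⟩)
    rcases lt_trichotomy y (x 1) with h | h | h
    · exact h
    · exact absurd h (hy 1 le_rfl hm)
    · exact absurd h h1

/-- the index-counting function -/
private lemma k_lemma (m : ℕ) (hm : 1 ≤ m) (x : ℕ → ℝ)
    (hx : ∀ i j, 1 ≤ i → i < j → j ≤ m → x i < x j) :
    ∃ k : ℝ → ℕ, Measurable k ∧ (∀ y, k y ≤ m)
      ∧ (∀ y, y < x 1 → k y = 0)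
      ∧ (∀ y, x m < y → k y = m)
      ∧ (∀ i, 1 ≤ i → i < m → ∀ y, x i < y → y < x (i+1) → k y = i) := by
  refine ⟨fun y => ((Finset.Icc 1 m).filter (fun i => x i < y)).card, ?_, ?_, ?_, ?_, ?_⟩
  · have : (fun y : ℝ => ((Finset.Icc 1 m).filter (fun i => x i < y)).card)
        = fun y => ∑ i ∈ Finset.Icc 1 m, if x i < y then 1 else 0 := by
      funext y; rw [Finset.card_filter]
    rw [this]
    exact Finset.measurable_sum _ (fun i _ =>
      Measurable.ite (measurableSet_Ioi (a := x i)) measurable_const measurable_const)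
  · intro y
    calc ((Finset.Icc 1 m).filter (fun i => x i < y)).card
        ≤ (Finset.Icc 1 m).card := Finset.card_filter_le _ _
      _ = m := by rw [Nat.card_Icc]; omega
  · intro y hy
    rw [Finset.card_eq_zero, Finset.filter_eq_empty_iff]
    intro i hi
    rw [Finset.mem_Icc] at hi
    have : x 1 ≤ x i := by
      rcases eq_or_lt_of_le hi.1 with h | h
      · rw [← h]
      · exact le_of_lt (hx 1 i le_rfl h hi.2)
    push_neg
    linarith
  · intro y hy
    have : (Finset.Icc 1 m).filter (fun i => x i < y) = Finset.Icc 1 m := by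
      apply Finset.filter_true_of_mem
      intro i hi
      rw [Finset.mem_Icc] at hi
      have : x i ≤ x m := by
        rcases eq_or_lt_of_le hi.2 with h | h
        · rw [h]
        · exact le_of_lt (hx i m hi.1 h le_rfl)
      linarith
    show ((Finset.Icc 1 m).filter (fun i => x i < y)).card = m
    rw [this, Nat.card_Icc]; omega
  · intro i hi1 him y hy1 hy2
    have : (Finset.Icc 1 m).filter (fun j => x j < y) = Finset.Icc 1 i := by
      ext j
      rw [Finset.mem_filter, Finset.mem_Icc, Finset.mem_Icc]
      constructor
      · rintro ⟨⟨hj1, hjm⟩, hxj⟩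
        refine ⟨hj1, ?_⟩
        by_contra h
        push_neg at h
        have : x (i+1) ≤ x j := by
          rcases eq_or_lt_of_le (show i + 1 ≤ j by omega) with h' | h'
          · rw [h']
          · exact le_of_lt (hx (i+1) j (by omega) h' hjm)
        linarith
      · rintro ⟨hj1, hji⟩
        have : x j ≤ x i := by
          rcases eq_or_lt_of_le hji with h' | h'
          · rw [h']
          · exact le_of_lt (hx j i hj1 h' (by omega))
        exact ⟨⟨hj1, by omega⟩, by linarith⟩
    show ((Finset.Icc 1 m).filter (fun j => x j < y)).card = i
    rw [this, Nat.card_Icc]; omega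

/-- structure lemma for a piecewise function -/
private lemma piecewise_struct (m : ℕ) (hm : 1 ≤ m) (x : ℕ → ℝ)
    (hx : ∀ i j, 1 ≤ i → i < j → j ≤ m → x i < x j)
    (f : ℕ → ℝ → ℂ) (hf : ∀ i ≤ m, ContDiff ℝ (⊤ : ℕ∞) (f i))
    (F : ℝ → ℂ)
    (hF0 : ∀ y : ℝ, y < x 1 → F y = f 0 y)
    (hFi : ∀ i, 1 ≤ i → i < m → ∀ y : ℝ, x i < y → y < x (i + 1) → F y = f i y)
    (hFm : ∀ y : ℝ, x m < y → F y = f m y) :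
    ∃ P : ℝ → ℂ, Measurable P
      ∧ (∀ y, (∀ i, 1 ≤ i → i ≤ m → y ≠ x i) → F y = P y)
      ∧ (∀ K : Set ℝ, IsCompact K → ∃ C : ℝ, 0 ≤ C ∧ ∀ y ∈ K, ‖P y‖ ≤ C) := by
  obtain ⟨k, hkmeas, hkle, hk0, hkm, hki⟩ := k_lemma m hm x hx
  refine ⟨fun y => f (k y) y, ?_, ?_, ?_⟩
  · have hrep : (fun y => f (k y) y)
        = fun y => ∑ i ∈ Finset.range (m+1), if k y = i then f i y else 0 := by
      funext y
      rw [Finset.sum_ite_eq (Finset.range (m+1)) (k y) (fun i => f i y)]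
      simp [Finset.mem_range, Nat.lt_succ_of_le (hkle y)]
    rw [hrep]
    refine Finset.measurable_sum _ (fun i hi => ?_)
    refine Measurable.ite (hkmeas (measurableSet_singleton i)) ?_ measurable_const
    exact (hf i (Nat.lt_succ_iff.mp (Finset.mem_range.mp hi))).continuous.measurable
  · intro y hy
    show F y = f (k y) y
    rcases tri_lemma m hm x hx y hy with h | h | ⟨i, hi1, him, h1, h2⟩
    · rw [hF0 y h, hk0 y h]
    · rw [hFm y h, hkm y h]
    · rw [hFi i hi1 him y h1 h2, hki i hi1 him y h1 h2]
  · intro K hK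
    have hcont : Continuous (fun y => ∑ i ∈ Finset.range (m+1), ‖f i y‖) :=
      continuous_finset_sum _ (fun i hi =>
        (hf i (Nat.lt_succ_iff.mp (Finset.mem_range.mp hi))).continuous.norm)
    obtain ⟨C, hC⟩ := hK.exists_bound_of_continuousOn hcont.continuousOn
    refine ⟨max C 0, le_max_right _ _, fun y hy => ?_⟩
    have h1 : ‖f (k y) y‖ ≤ ∑ i ∈ Finset.range (m+1), ‖f i y‖ :=
      Finset.single_le_sum (f := fun i => ‖f i y‖) (fun i _ => norm_nonneg _)
        (Finset.mem_range.mpr (Nat.lt_succ_of_le (hkle y)))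
    have h2 := hC y hy
    have h3 : ∑ i ∈ Finset.range (m+1), ‖f i y‖
        ≤ ‖∑ i ∈ Finset.range (m+1), ‖f i y‖‖ := le_abs_self _
    calc ‖f (k y) y‖ ≤ _ := h1
      _ ≤ C := le_trans h3 h2
      _ ≤ max C 0 := le_max_left _ _

/-- continuity off the breakpoints -/
private lemma contAt_off_breaks (m : ℕ) (hm : 1 ≤ m) (x : ℕ → ℝ)
    (hx : ∀ i j, 1 ≤ i → i < j → j ≤ m → x i < x j)
    (f : ℕ → ℝ → ℂ) (hf : ∀ i ≤ m, ContDiff ℝ (⊤ : ℕ∞) (f i))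
    (F : ℝ → ℂ)
    (hF0 : ∀ y : ℝ, y < x 1 → F y = f 0 y)
    (hFi : ∀ i, 1 ≤ i → i < m → ∀ y : ℝ, x i < y → y < x (i + 1) → F y = f i y)
    (hFm : ∀ y : ℝ, x m < y → F y = f m y)
    (y : ℝ) (hy : ∀ i, 1 ≤ i → i ≤ m → y ≠ x i) :
    ContinuousAt F y := by
  rcases tri_lemma m hm x hx y hy with h | h | ⟨i, hi1, him, h1, h2⟩
  · refine ((hf 0 (Nat.zero_le m)).continuous.continuousAt).congr ?_
    filter_upwards [isOpen_Iio.mem_nhds h] with z hz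
    exact (hF0 z hz).symm
  · refine ((hf m le_rfl).continuous.continuousAt).congr ?_
    filter_upwards [isOpen_Ioi.mem_nhds h] with z hz
    exact (hFm z hz).symm
  · refine ((hf i (le_of_lt him)).continuous.continuousAt).congr ?_
    filter_upwards [isOpen_Ioo.mem_nhds (⟨h1, h2⟩ : y ∈ Set.Ioo (x i) (x (i+1)))] with z hz
    exact (hFi i hi1 him z hz.1 hz.2).symm

private lemma ae_ne_finite (m : ℕ) (z : ℕ → ℝ) :
    ∀ᵐ y : ℝ, ∀ i, 1 ≤ i → i ≤ m → y ≠ z i := by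
  have hfin : (z '' Set.Icc 1 m).Finite := (Set.finite_Icc 1 m).image z
  have h0 : volume (z '' Set.Icc 1 m) = 0 := hfin.measure_zero _
  rw [ae_iff]
  refine measure_mono_null ?_ h0
  intro y hy
  simp only [Set.mem_setOf_eq] at hy
  push_neg at hy
  obtain ⟨i, hi1, him, hyi⟩ := hy
  exact ⟨i, ⟨hi1, him⟩, hyi.symm⟩

/-- Pairing form of the product `F * G` (Theorem 2.5): the Hörmander product
`F(x)·G(x+ε)` of shifted piecewise-smooth distributions with singular parts,
paired against a test function `t`, converges as `ε → 0⁺` to the pairing of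
`F * G = Σ (a_{ij} g_i + b_{ij} f_{i-1}) δ^{(j)}(x - x_i) + Σ f_i g_i χ_{Ω_i}`. -/
theorem stmt0
    (m N : ℕ) (hm : 1 ≤ m)
    (x : ℕ → ℝ) (hx : ∀ i j, 1 ≤ i → i < j → j ≤ m → x i < x j)
    (f g : ℕ → ℝ → ℂ)
    (hf : ∀ i ≤ m, ContDiff ℝ (⊤ : ℕ∞) (f i)) (hg : ∀ i ≤ m, ContDiff ℝ (⊤ : ℕ∞) (g i))
    (a b : ℕ → ℕ → ℂ)
    (F G : ℝ → ℂ)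
    (hF0 : ∀ y : ℝ, y < x 1 → F y = f 0 y)
    (hFi : ∀ i, 1 ≤ i → i < m → ∀ y : ℝ, x i < y → y < x (i + 1) → F y = f i y)
    (hFm : ∀ y : ℝ, x m < y → F y = f m y)
    (hG0 : ∀ y : ℝ, y < x 1 → G y = g 0 y)
    (hGi : ∀ i, 1 ≤ i → i < m → ∀ y : ℝ, x i < y → y < x (i + 1) → G y = g i y)
    (hGm : ∀ y : ℝ, x m < y → G y = g m y)
    (t : ℝ → ℂ) (ht : ContDiff ℝ (⊤ : ℕ∞) t) (htc : HasCompactSupport t) :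
    Tendsto (fun ε : ℝ =>
        (∫ y : ℝ, F y * G (y + ε) * t y)
        + ∑ i ∈ Finset.Icc 1 m, ∑ j ∈ Finset.range (N + 1),
            a i j * (-1 : ℂ) ^ j *
              iteratedDeriv j (fun y => g i (y + ε) * t y) (x i)
        + ∑ i ∈ Finset.Icc 1 m, ∑ j ∈ Finset.range (N + 1),
            b i j * (-1 : ℂ) ^ j *
              iteratedDeriv j (fun y => f (i - 1) y * t y) (x i - ε))
      (𝓝[>] (0 : ℝ))
      (𝓝 ((∫ y : ℝ, F y * G y * t y)
        + ∑ i ∈ Finset.Icc 1 m, ∑ j ∈ Finset.range (N + 1),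
            (-1 : ℂ) ^ j *
              iteratedDeriv j
                (fun y => (a i j * g i y + b i j * f (i - 1) y) * t y) (x i))) := by
  -- split the limit singular sum
  have hS : (∑ i ∈ Finset.Icc 1 m, ∑ j ∈ Finset.range (N + 1),
        (-1 : ℂ) ^ j * iteratedDeriv j
          (fun y => (a i j * g i y + b i j * f (i - 1) y) * t y) (x i))
      = (∑ i ∈ Finset.Icc 1 m, ∑ j ∈ Finset.range (N + 1),
          a i j * (-1 : ℂ) ^ j * iteratedDeriv j (fun y => g i y * t y) (x i))
        + (∑ i ∈ Finset.Icc 1 m, ∑ j ∈ Finset.range (N + 1),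
          b i j * (-1 : ℂ) ^ j * iteratedDeriv j (fun y => f (i - 1) y * t y) (x i)) := by
    rw [← Finset.sum_add_distrib]
    refine Finset.sum_congr rfl (fun i hi => ?_)
    rw [← Finset.sum_add_distrib]
    refine Finset.sum_congr rfl (fun j hj => ?_)
    rw [Finset.mem_Icc] at hi
    have hgt : ContDiff ℝ (⊤ : ℕ∞) (fun y => g i y * t y) := (hg i hi.2).mul ht
    have hft : ContDiff ℝ (⊤ : ℕ∞) (fun y => f (i-1) y * t y) :=
      (hf (i-1) (le_trans (Nat.sub_le i 1) hi.2)).mul ht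
    have hrw : (fun y => (a i j * g i y + b i j * f (i - 1) y) * t y)
        = fun y => a i j * (g i y * t y) + b i j * (f (i-1) y * t y) := by
      funext y; ring
    rw [hrw, itd_add (contDiff_const.mul hgt) (contDiff_const.mul hft),
      itd_cmul _ hgt, itd_cmul _ hft]
    ring
  rw [hS, ← add_assoc]
  refine Tendsto.add (Tendsto.add ?_ ?_) ?_
  · -- the integral part
    obtain ⟨P, hPmeas, hFP, hPbd⟩ := piecewise_struct m hm x hx f hf F hF0 hFi hFm
    obtain ⟨Q, hQmeas, hGQ, hQbd⟩ := piecewise_struct m hm x hx g hg G hG0 hGi hGm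
    set K : Set ℝ := tsupport t with hKdef
    have hK : IsCompact K := htc
    set K' : Set ℝ := K + Set.Icc (0:ℝ) 1 with hK'def
    have hK' : IsCompact K' := hK.add isCompact_Icc
    obtain ⟨C1, hC1n, hC1⟩ := hPbd K' hK'
    obtain ⟨C2, hC2n, hC2⟩ := hQbd K' hK'
    have hKsub : ∀ y ∈ K, ∀ ε ∈ Set.Icc (0:ℝ) 1, y + ε ∈ K' :=
      fun y hy ε hε => Set.add_mem_add hy hε
    have hFP' : F =ᵐ[volume] P := by
      filter_upwards [ae_ne_finite m x] with y hy using hFP y hy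
    have hGQε : ∀ ε : ℝ, (fun y => G (y + ε)) =ᵐ[volume] (fun y => Q (y + ε)) := by
      intro ε
      filter_upwards [ae_ne_finite m (fun i => x i - ε)] with y hy
      refine hGQ (y + ε) (fun i hi1 him h => ?_)
      exact hy i hi1 him (by linarith)
    refine tendsto_integral_filter_of_dominated_convergence
      (fun y => C1 * C2 * ‖t y‖) ?_ ?_ ?_ ?_
    · refine Filter.Eventually.of_forall (fun ε => ?_)
      have hmeas : AEStronglyMeasurable (fun y => P y * Q (y + ε) * t y) volume :=
        ((hPmeas.mul (hQmeas.comp (measurable_add_const ε))).mul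
          ht.continuous.measurable).aestronglyMeasurable
      refine hmeas.congr ?_
      filter_upwards [hFP', hGQε ε] with y h1 h2
      rw [h1, h2]
    · filter_upwards [Ioc_mem_nhdsGT (zero_lt_one)] with ε hε
      filter_upwards [hFP', hGQε ε] with y h1 h2
      rw [h1, h2]
      by_cases hty : t y = 0
      · simp [hty]
      · have hyK : y ∈ K := subset_tsupport t hty
        have hyK' : y ∈ K' := by
          have := hKsub y hyK 0 ⟨le_rfl, zero_le_one⟩
          simpa using this
        have hyεK' : y + ε ∈ K' := hKsub y hyK ε ⟨le_of_lt hε.1, hε.2⟩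
        rw [norm_mul, norm_mul]
        have h3 := hC1 y hyK'
        have h4 := hC2 _ hyεK'
        gcongr
    · apply Continuous.integrable_of_hasCompactSupport
      · exact continuous_const.mul ht.continuous.norm
      · have : HasCompactSupport (fun y => ‖t y‖) := htc.norm
        exact this.mul_left
    · filter_upwards [ae_ne_finite m x] with y hy
      have hGy : ContinuousAt G y := contAt_off_breaks m hm x hx g hg G hG0 hGi hGm y hy
      have h1 : Filter.Tendsto (fun ε : ℝ => G (y + ε)) (𝓝[>] 0) (𝓝 (G y)) :=
        hGy.tendsto.comp (tendsto_add_right y)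
      exact (tendsto_const_nhds.mul h1).mul tendsto_const_nhds
  · -- the a-sum
    refine tendsto_finset_sum _ (fun i hi => tendsto_finset_sum _ (fun j hj => ?_))
    rw [Finset.mem_Icc] at hi
    exact (tendsto_itd_shift (hg i hi.2) ht j (x i)).const_mul _
  · -- the b-sum
    refine tendsto_finset_sum _ (fun i hi => tendsto_finset_sum _ (fun j hj => ?_))
    rw [Finset.mem_Icc] at hi
    exact (tendsto_itd_sub ((hf (i-1) (le_trans (Nat.sub_le i 1) hi.2)).mul ht) j (x i)).const_mul _
end

section
/- Let g_−, g_+ : ℝ → ℂ be smooth functions and define g : ℝ → ℂ by g(x) = g_−(x) for x < 0 and g(x) = g_+(x) for x ≥ 0. Let ε_0 > 0 and for each ε ∈ (0, ε_0] let v_ε : ℝ → ℝ be a smooth non-negative function with support contained in [−ε, ε] and ∫_ℝ v_ε(x) dx = 1. Then for every k ∈ ℕ and every test function t: (i) lim_{ε→0⁺} ∫_ℝ v_ε^{(k)}(x − ε) g(x) t(x) dx = (−1)^k (g_+ t)^{(k)}(0); (ii) lim_{ε→0⁺} ∫_ℝ v_ε^{(k)}(x + ε) g(x) t(x) dx = (−1)^k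 (g_− t)^{(k)}(0). -/
open MeasureTheory Filter Set
open scoped Topology ContDiff

lemma aux_support_iteratedDeriv {F : Type*} [NormedAddCommGroup F] [NormedSpace ℝ F]
    (f : ℝ → F) (k : ℕ) :
    Function.support (iteratedDeriv k f) ⊆ tsupport f := by
  induction k with
  | zero => simpa [iteratedDeriv_zero] using subset_tsupport f
  | succ n ih =>
    rw [iteratedDeriv_succ]
    exact support_deriv_subset.trans (closure_minimal ih isClosed_closure)

lemma aux_iteratedDeriv_ofReal (f : ℝ → ℝ) (hf : ContDiff ℝ ∞ f) (k : ℕ) :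
    iteratedDeriv k (fun x => ((f x : ℝ) : ℂ)) = fun x => ((iteratedDeriv k f x : ℝ) : ℂ) := by
  induction k with
  | zero => simp
  | succ n ih =>
    funext x
    rw [iteratedDeriv_succ, ih, iteratedDeriv_succ]
    have hd : DifferentiableAt ℝ (iteratedDeriv n f) x := by
      rw [iteratedDeriv_eq_iterate]
      exact ((hf.iterate_deriv n).differentiable (by simp)).differentiableAt
    exact hd.hasDerivAt.ofReal_comp.deriv

lemma aux_ibp (k : ℕ) (f φ : ℝ → ℂ) (hf : ContDiff ℝ ∞ f) (hfc : HasCompactSupport f)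
    (hφ : ContDiff ℝ ∞ φ) :
    ∫ x : ℝ, iteratedDeriv k f x * φ x = (-1 : ℂ) ^ k * ∫ x : ℝ, f x * iteratedDeriv k φ x := by
  induction k generalizing f with
  | zero => simp
  | succ n ih =>
    have hf' : ContDiff ℝ ∞ (deriv f) := (contDiff_infty_iff_deriv.mp hf).2
    rw [iteratedDeriv_succ', ih (deriv f) hf' hfc.deriv]
    set ψ := iteratedDeriv n φ with hψdef
    have hψ : ContDiff ℝ ∞ ψ := by
      rw [hψdef, iteratedDeriv_eq_iterate]; exact hφ.iterate_deriv n
    have h1 : ∀ x, HasDerivAt f (deriv f x) x := fun x =>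
      ((hf.differentiable (by simp)) x).hasDerivAt
    have h2 : ∀ x, HasDerivAt ψ (deriv ψ x) x := fun x =>
      ((hψ.differentiable (by simp)) x).hasDerivAt
    have hψ' : Continuous (deriv ψ) := (contDiff_infty_iff_deriv.mp hψ).2.continuous
    have huv' : Integrable (f * deriv ψ) :=
      (hf.continuous.mul hψ').integrable_of_hasCompactSupport (hfc.mul_right)
    have hu'v : Integrable (deriv f * ψ) :=
      (hf'.continuous.mul hψ.continuous).integrable_of_hasCompactSupport (hfc.deriv.mul_right)
    have huv : Integrable (f * ψ) :=
      (hf.continuous.mul hψ.continuous).integrable_of_hasCompactSupport (hfc.mul_right)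
    have step := integral_mul_deriv_eq_deriv_mul_of_integrable (fun x _ => h1 x) (fun x _ => h2 x) huv' hu'v huv
    have hder : iteratedDeriv (n + 1) φ = deriv ψ := iteratedDeriv_succ
    rw [hder]
    linear_combination (-1 : ℂ) ^ n * step

lemma aux_moll (ε₀ : ℝ) (hε₀ : 0 < ε₀) (v : ℝ → ℝ → ℝ)
    (hv_cont : ∀ ε ∈ Set.Ioc (0 : ℝ) ε₀, Continuous (v ε))
    (hv_nonneg : ∀ ε ∈ Set.Ioc (0 : ℝ) ε₀, ∀ y : ℝ, 0 ≤ v ε y)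
    (hv_supp : ∀ ε ∈ Set.Ioc (0 : ℝ) ε₀, Function.support (v ε) ⊆ Set.Icc (-ε) ε)
    (hv_int : ∀ ε ∈ Set.Ioc (0 : ℝ) ε₀, ∫ y : ℝ, v ε y = 1)
    (f : ℝ → ℂ) (hf : Continuous f) (c : ℝ) :
    Tendsto (fun ε : ℝ => ∫ x : ℝ, ((v ε x : ℝ) : ℂ) * f (x + c * ε)) (𝓝[>] (0 : ℝ))
      (𝓝 (f 0)) := by
  rw [Metric.tendsto_nhdsWithin_nhds]
  intro δ hδ
  obtain ⟨r, hr, hball⟩ := Metric.continuousAt_iff.mp hf.continuousAt (δ / 2) (by positivity)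
  have hc1 : (0 : ℝ) < 1 + |c| := by positivity
  refine ⟨min (r / (1 + |c|)) ε₀, by positivity, ?_⟩
  intro ε hε hd
  have hεpos : (0 : ℝ) < ε := hε
  rw [Real.dist_eq, sub_zero, abs_of_pos hεpos] at hd
  have hε1 : ε < r / (1 + |c|) := lt_of_lt_of_le hd (min_le_left _ _)
  have hεmem : ε ∈ Set.Ioc (0 : ℝ) ε₀ := ⟨hεpos, le_of_lt (lt_of_lt_of_le hd (min_le_right _ _))⟩
  have hcont := hv_cont ε hεmem
  have hcs : HasCompactSupport (v ε) :=
    HasCompactSupport.intro isCompact_Icc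
      (fun x hx => Function.notMem_support.mp (fun hs => hx (hv_supp ε hεmem hs)))
  have hcsC : HasCompactSupport (fun x => ((v ε x : ℝ) : ℂ)) :=
    hcs.comp_left (g := Complex.ofReal) Complex.ofReal_zero
  have hintv : Integrable (v ε) := hcont.integrable_of_hasCompactSupport hcs
  have hcontC : Continuous fun x => ((v ε x : ℝ) : ℂ) := Complex.continuous_ofReal.comp hcont
  have hcf : Continuous fun x => f (x + c * ε) := hf.comp (continuous_id.add continuous_const)
  have hint1 : Integrable (fun x => ((v ε x : ℝ) : ℂ) * f (x + c * ε)) :=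
    (hcontC.mul hcf).integrable_of_hasCompactSupport hcsC.mul_right
  have hint0 : Integrable (fun x => ((v ε x : ℝ) : ℂ) * f 0) :=
    (hcontC.mul continuous_const).integrable_of_hasCompactSupport hcsC.mul_right
  have hone : (∫ x : ℝ, ((v ε x : ℝ) : ℂ)) = 1 := by
    have h := integral_ofReal (𝕜 := ℂ) (f := fun x : ℝ => v ε x) (μ := volume)
    rw [hv_int ε hεmem] at h
    simpa using h
  have hsub : (∫ x : ℝ, ((v ε x : ℝ) : ℂ) * f (x + c * ε)) - f 0
      = ∫ x : ℝ, ((v ε x : ℝ) : ℂ) * (f (x + c * ε) - f 0) := by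
    simp only [mul_sub]
    rw [integral_sub hint1 hint0, integral_mul_const, hone, one_mul]
  rw [dist_eq_norm, hsub]
  have hbound : ∀ x : ℝ, ‖((v ε x : ℝ) : ℂ) * (f (x + c * ε) - f 0)‖ ≤ (δ / 2) * v ε x := by
    intro x
    by_cases hx : v ε x = 0
    · simp [hx]
    · have hxI : x ∈ Set.Icc (-ε) ε := hv_supp ε hεmem (Function.mem_support.mpr hx)
      have hxabs : |x| ≤ ε := abs_le.mpr ⟨hxI.1, hxI.2⟩
      have hsh : |x + c * ε| < r := by
        have h1 : |x + c * ε| ≤ |x| + |c| * ε := by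
          calc |x + c * ε| ≤ |x| + |c * ε| := abs_add_le _ _
          _ = |x| + |c| * ε := by rw [abs_mul, abs_of_pos hεpos]
        have h2 : |x| + |c| * ε ≤ (1 + |c|) * ε := by nlinarith [abs_nonneg c]
        have h3 : (1 + |c|) * ε < r := by
          rw [lt_div_iff₀ hc1] at hε1; nlinarith
        linarith
      have hb := hball (x := x + c * ε) (by rwa [Real.dist_eq, sub_zero])
      rw [dist_eq_norm] at hb
      rw [norm_mul, Complex.norm_real, Real.norm_eq_abs, abs_of_nonneg (hv_nonneg ε hεmem x)]
      calc v ε x * ‖f (x + c * ε) - f 0‖ ≤ v ε x * (δ / 2) :=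
            mul_le_mul_of_nonneg_left (le_of_lt hb) (hv_nonneg ε hεmem x)
        _ = (δ / 2) * v ε x := mul_comm _ _
  have hle : ‖∫ x : ℝ, ((v ε x : ℝ) : ℂ) * (f (x + c * ε) - f 0)‖
      ≤ ∫ x : ℝ, (δ / 2) * v ε x :=
    norm_integral_le_of_norm_le (hintv.const_mul (δ / 2)) (ae_of_all _ hbound)
  have heq : (∫ x : ℝ, (δ / 2) * v ε x) = δ / 2 := by
    rw [integral_const_mul, hv_int ε hεmem, mul_one]
  rw [heq] at hle
  linarith

/-- Weak operator convergence for a purely singular coefficient `δ^{(k)}`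
(Theorem 3.8): the right-shifted regularizations of `δ^{(k)}` acting by
multiplication on a piecewise smooth `g` converge to `ψ ↦ δ^{(k)} * ψ`
(pairing `(-1)^k (gp t)^{(k)}(0)`), and the left-shifted ones to
`ψ ↦ ψ * δ^{(k)}` (pairing `(-1)^k (gm t)^{(k)}(0)`). -/
theorem stmt4
    (gm gp : ℝ → ℂ) (hgm : ContDiff ℝ (⊤ : ℕ∞) gm) (hgp : ContDiff ℝ (⊤ : ℕ∞) gp)
    (G : ℝ → ℂ) (hG : ∀ y : ℝ, G y = if y < 0 then gm y else gp y)
    (ε₀ : ℝ) (hε₀ : 0 < ε₀)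
    (v : ℝ → ℝ → ℝ)
    (hv_smooth : ∀ ε ∈ Set.Ioc (0 : ℝ) ε₀, ContDiff ℝ (⊤ : ℕ∞) (v ε))
    (hv_nonneg : ∀ ε ∈ Set.Ioc (0 : ℝ) ε₀, ∀ y : ℝ, 0 ≤ v ε y)
    (hv_supp : ∀ ε ∈ Set.Ioc (0 : ℝ) ε₀,
      Function.support (v ε) ⊆ Set.Icc (-ε) ε)
    (hv_int : ∀ ε ∈ Set.Ioc (0 : ℝ) ε₀, ∫ y : ℝ, v ε y = 1)
    (k : ℕ) (t : ℝ → ℂ) (ht : ContDiff ℝ (⊤ : ℕ∞) t) (htc : HasCompactSupport t) :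
    Tendsto (fun ε : ℝ => ∫ y : ℝ, ((iteratedDeriv k (v ε) (y - ε) : ℝ) : ℂ) * G y * t y)
        (𝓝[>] (0 : ℝ))
        (𝓝 ((-1 : ℂ) ^ k * iteratedDeriv k (fun y => gp y * t y) 0))
    ∧ Tendsto (fun ε : ℝ => ∫ y : ℝ, ((iteratedDeriv k (v ε) (y + ε) : ℝ) : ℂ) * G y * t y)
        (𝓝[>] (0 : ℝ))
        (𝓝 ((-1 : ℂ) ^ k * iteratedDeriv k (fun y => gm y * t y) 0)) := by
  -- basic facts
  have hIoc : Set.Ioc (0 : ℝ) ε₀ ∈ 𝓝[>] (0 : ℝ) := Ioc_mem_nhdsGT hε₀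
  have hcast : ∀ ε ∈ Set.Ioc (0 : ℝ) ε₀,
      iteratedDeriv k (fun x => ((v ε x : ℝ) : ℂ)) = fun x => ((iteratedDeriv k (v ε) x : ℝ) : ℂ) :=
    fun ε hε => aux_iteratedDeriv_ofReal (v ε) ((hv_smooth ε hε).of_le (by simp)) k
  have htsupp : ∀ ε ∈ Set.Ioc (0 : ℝ) ε₀, tsupport (v ε) ⊆ Set.Icc (-ε) ε :=
    fun ε hε => closure_minimal (hv_supp ε hε) isClosed_Icc
  have hzero : ∀ ε ∈ Set.Ioc (0 : ℝ) ε₀, ∀ z : ℝ, z ∉ Set.Icc (-ε) ε →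
      iteratedDeriv k (v ε) z = 0 := by
    intro ε hε z hz
    by_contra h0
    exact hz (htsupp ε hε (aux_support_iteratedDeriv (v ε) k (Function.mem_support.mpr h0)))
  -- the main claim, for a general smooth ψ and shift c
  have claim : ∀ (c : ℝ) (ψ : ℝ → ℂ), ContDiff ℝ ∞ ψ →
      Tendsto (fun ε : ℝ => ∫ x : ℝ, ((iteratedDeriv k (v ε) x : ℝ) : ℂ) * ψ (x + c * ε))
        (𝓝[>] (0 : ℝ)) (𝓝 ((-1 : ℂ) ^ k * iteratedDeriv k ψ 0)) := by
    intro c ψ hψ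
    have hψc : Continuous (iteratedDeriv k ψ) := by
      rw [iteratedDeriv_eq_iterate]; exact (hψ.iterate_deriv k).continuous
    have base := (aux_moll ε₀ hε₀ v (fun ε hε => (hv_smooth ε hε).continuous)
      hv_nonneg hv_supp hv_int (iteratedDeriv k ψ) hψc c).const_mul ((-1 : ℂ) ^ k)
    refine Tendsto.congr' ?_ base
    filter_upwards [hIoc] with ε hεmem
    have hfC : ContDiff ℝ ∞ (fun x => ((v ε x : ℝ) : ℂ)) :=
      Complex.ofRealCLM.contDiff.comp ((hv_smooth ε hεmem).of_le (by simp))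
    have hcs : HasCompactSupport (v ε) :=
      HasCompactSupport.intro isCompact_Icc
        (fun x hx => Function.notMem_support.mp (fun hs => hx (hv_supp ε hεmem hs)))
    have hcsC : HasCompactSupport (fun x => ((v ε x : ℝ) : ℂ)) :=
      hcs.comp_left (g := Complex.ofReal) Complex.ofReal_zero
    have hφ : ContDiff ℝ ∞ (fun x => ψ (x + c * ε)) :=
      hψ.comp (contDiff_id.add contDiff_const)
    have h1 := aux_ibp k (fun x => ((v ε x : ℝ) : ℂ)) (fun x => ψ (x + c * ε)) hfC hcsC hφ
    rw [hcast ε hεmem, iteratedDeriv_comp_add_const k ψ (c * ε)] at h1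
    rw [← h1]
  -- the two parts
  constructor
  · -- right-shifted case
    have lim := claim 1 (fun y => gp y * t y) ((hgp.mul ht).of_le (by simp))
    refine Tendsto.congr' ?_ lim
    filter_upwards [hIoc] with ε hεmem
    have step1 : (∫ y : ℝ, ((iteratedDeriv k (v ε) (y - ε) : ℝ) : ℂ) * G y * t y)
        = ∫ y : ℝ, ((iteratedDeriv k (v ε) (y - ε) : ℝ) : ℂ) * (gp y * t y) := by
      apply integral_congr_ae; apply ae_of_all
      intro y
      by_cases hy : y < 0
      · have : iteratedDeriv k (v ε) (y - ε) = 0 := by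
          apply hzero ε hεmem
          intro hmem
          have := hmem.1
          linarith
        simp [this]
      · simp only [hG y, if_neg hy, mul_assoc]
    have step2 : (∫ y : ℝ, ((iteratedDeriv k (v ε) (y - ε) : ℝ) : ℂ) * (gp y * t y))
        = ∫ x : ℝ, ((iteratedDeriv k (v ε) x : ℝ) : ℂ) * (gp (x + ε) * t (x + ε)) := by
      rw [← integral_add_right_eq_self
        (fun y : ℝ => ((iteratedDeriv k (v ε) (y - ε) : ℝ) : ℂ) * (gp y * t y)) ε]
      simp only [add_sub_cancel_right]
    rw [step1, step2]
    simp only [one_mul]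
  · -- left-shifted case
    have lim := claim (-1) (fun y => gm y * t y) ((hgm.mul ht).of_le (by simp))
    refine Tendsto.congr' ?_ lim
    filter_upwards [hIoc] with ε hεmem
    have hεpos : (0 : ℝ) < ε := hεmem.1
    have step1 : (∫ y : ℝ, ((iteratedDeriv k (v ε) (y + ε) : ℝ) : ℂ) * G y * t y)
        = ∫ y : ℝ, ((iteratedDeriv k (v ε) (y + ε) : ℝ) : ℂ) * (gm y * t y) := by
      apply integral_congr_ae
      have h0 : ∀ᵐ (y : ℝ), y ≠ 0 := by
        rw [ae_iff]
        have : {y : ℝ | ¬ y ≠ 0} = {0} := by ext y; simp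
        rw [this]
        exact Real.volume_singleton
      filter_upwards [h0] with y hy
      rcases lt_or_gt_of_ne hy with hlt | hgt
      · simp only [hG y, if_pos hlt, mul_assoc]
      · have : iteratedDeriv k (v ε) (y + ε) = 0 := by
          apply hzero ε hεmem
          intro hmem
          have := hmem.2
          linarith
        simp [this]
    have step2 : (∫ y : ℝ, ((iteratedDeriv k (v ε) (y + ε) : ℝ) : ℂ) * (gm y * t y))
        = ∫ x : ℝ, ((iteratedDeriv k (v ε) x : ℝ) : ℂ) * (gm (x + (-1) * ε) * t (x + (-1) * ε)) := by
      rw [← integral_add_right_eq_self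
        (fun y : ℝ => ((iteratedDeriv k (v ε) (y + ε) : ℝ) : ℂ) * (gm y * t y)) (-ε)]
      simp only [neg_add_cancel_right, add_neg_cancel_right]
      norm_num
    rw [step1, step2]
end
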